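/- arXiv:1807.08334 — 3 statements merged into one kernel-verified Lean document; each statement's English description precedes it below -/
import Mathlib

section
/- For every positive integer k, there exists a connected graph with edge metric dimension exactly k that contains the star K_{1,2^k} as a subgraph. Concretely: take a star with center c and 2^k leaves labeled by binary strings of length k, add k new vertices u_1,...,u_k, and join u_i to each leaf whose i-th coordinate is 0; then {u_1,...,u_k} is an edge resolving set. -/
/-!
The distance from an edge `vw` to a vertex `s` is `d(v, s)` or `d(v, s) - 1`, so an edge resolving
set `S` separates at most `2 ^ |S|` edges at `v`; with `2 ^ k` leaves at the centre this forces
`|S| ≥ k`. Conversely `{u_1, …, u_k}` resolves all edges: every edge joins a leaf `f` to the centre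
or to some `u_j`; it is within distance `1` of `u_i` exactly when `f i = 0`, which recovers `f`,
and at distance `0` from `u_i` exactly when its other endpoint is `u_i`, which recovers that
endpoint.
-/

open SimpleGraph Finset

/-- Distance from an edge (as an unordered pair) to a vertex: the minimum
of the distances from the two endpoints. -/
noncomputable def edgeVertexDist {V : Type*} (G : SimpleGraph V) (e : Sym2 V) (v : V) : ℕ :=
  Sym2.lift ⟨fun x y => min (G.dist x v) (G.dist y v), fun x y => by
    simp [min_comm]⟩ e

/-- `S` is a resolving set for the vertices of `G`. -/
def IsResolvingSet {V : Type*} (G : SimpleGraph V) (S : Set V) : Prop :=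
  ∀ u w : V, (∀ s ∈ S, G.dist u s = G.dist w s) → u = w

/-- `S` is a resolving set for the edges of `G`. -/
def IsEdgeResolvingSet {V : Type*} (G : SimpleGraph V) (S : Set V) : Prop :=
  ∀ e ∈ G.edgeSet, ∀ f ∈ G.edgeSet,
    (∀ s ∈ S, edgeVertexDist G e s = edgeVertexDist G f s) → e = f

/-- The metric dimension of `G`. -/
noncomputable def metricDim {V : Type*} (G : SimpleGraph V) : ℕ :=
  sInf {k | ∃ S : Finset V, S.card = k ∧ IsResolvingSet G (S : Set V)}

/-- The edge metric dimension of `G`. -/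
noncomputable def edgeMetricDim {V : Type*} (G : SimpleGraph V) : ℕ :=
  sInf {k | ∃ S : Finset V, S.card = k ∧ IsEdgeResolvingSet G (S : Set V)}

section EdgeVertexDist

variable {V : Type*} {G : SimpleGraph V}

theorem edgeVertexDist_mk (x y v : V) :
    edgeVertexDist G s(x, y) v = min (G.dist x v) (G.dist y v) := rfl

theorem SimpleGraph.Connected.edgeVertexDist_eq_zero_iff (hG : G.Connected) {e : Sym2 V}
    {v : V} : edgeVertexDist G e v = 0 ↔ v ∈ e := by
  induction e using Sym2.ind with
  | _ x y =>
    rw [edgeVertexDist_mk, Nat.min_eq_zero_iff, hG.dist_eq_zero_iff, hG.dist_eq_zero_iff,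
      Sym2.mem_iff, eq_comm, eq_comm (a := y)]

theorem SimpleGraph.Connected.dist_le_one_iff (hG : G.Connected) {u v : V} :
    G.dist u v ≤ 1 ↔ u = v ∨ G.Adj u v := by
  rw [Nat.le_one_iff_eq_zero_or_eq_one, hG.dist_eq_zero_iff, dist_eq_one_iff_adj]

theorem edgeVertexDist_eq_or_eq_sub_one_of_adj {v w : V} (hvw : G.Adj v w) (s : V) :
    edgeVertexDist G s(v, w) s = G.dist v s ∨ edgeVertexDist G s(v, w) s = G.dist v s - 1 := by
  rw [edgeVertexDist_mk, dist_comm (u := v), dist_comm (u := w)]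
  rcases hvw.diff_dist_adj (u := s) with h | h | h <;> omega

theorem IsEdgeResolvingSet.card_le_two_pow {S : Finset V}
    (hS : IsEdgeResolvingSet G (S : Set V)) {v : V} {N : Finset V} (hN : ∀ w ∈ N, G.Adj v w) :
    N.card ≤ 2 ^ S.card := by
  classical
  let profile : V → S → Bool := fun w s => edgeVertexDist G s(v, w) s = G.dist v s
  have hinj : Set.InjOn profile N := by
    intro w hw w' hw' hprofile
    have hedge : s(v, w) = s(v, w') := by
      refine hS _ (hN w hw) _ (hN w' hw') fun s hs => ?_
      have hs := congrFun hprofile ⟨s, hs⟩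
      simp only [profile, decide_eq_decide] at hs
      rcases edgeVertexDist_eq_or_eq_sub_one_of_adj (hN w hw) s with h | h <;>
        rcases edgeVertexDist_eq_or_eq_sub_one_of_adj (hN w' hw') s with h' | h' <;> omega
    exact Sym2.congr_right.mp hedge
  calc N.card ≤ (Finset.univ : Finset (S → Bool)).card :=
        Finset.card_le_card_of_injOn profile (fun _ _ => Finset.mem_univ _) hinj
    _ = 2 ^ S.card := by simp

theorem edgeMetricDim_le {S : Finset V} (hS : IsEdgeResolvingSet G (S : Set V)) :
    edgeMetricDim G ≤ S.card :=
  Nat.sInf_le ⟨S, rfl, hS⟩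

theorem card_le_two_pow_edgeMetricDim (hG : ∃ S : Finset V, IsEdgeResolvingSet G (S : Set V))
    {v : V} {N : Finset V} (hN : ∀ w ∈ N, G.Adj v w) :
    N.card ≤ 2 ^ edgeMetricDim G := by
  obtain ⟨S, hS⟩ := hG
  obtain ⟨S, hcard, hS⟩ : edgeMetricDim G ∈ {k | ∃ S : Finset V, S.card = k ∧
      IsEdgeResolvingSet G (S : Set V)} :=
    Nat.sInf_mem ⟨S.card, S, rfl, hS⟩
  exact hcard ▸ hS.card_le_two_pow hN

end EdgeVertexDist

/-! The paper's graph: the centre `c` is `root`, the leaf labelled by a binary word is `leaf f`,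
and `u_i` is `coord i`; a coordinate `0` is encoded as `false`. -/
namespace BinaryStar

inductive Vertex (k : ℕ) : Type
  | root
  | leaf (f : Fin k → Bool)
  | coord (i : Fin k)
  deriving Fintype

open Vertex

variable {k : ℕ}

def Adj : Vertex k → Vertex k → Prop
  | root, leaf _ | leaf _, root => True
  | leaf f, coord i | coord i, leaf f => f i = false
  | _, _ => False

def graph (k : ℕ) : SimpleGraph (Vertex k) where
  Adj := BinaryStar.Adj
  symm := ⟨by rintro (_ | f | i) (_ | g | j) h <;> simp_all [BinaryStar.Adj]⟩
  loopless := ⟨by rintro (_ | f | i) h <;> simp_all [BinaryStar.Adj]⟩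

@[simp] theorem adj_root_leaf (f : Fin k → Bool) : (graph k).Adj root (leaf f) := trivial

@[simp] theorem adj_leaf_coord {f : Fin k → Bool} {i : Fin k} :
    (graph k).Adj (leaf f) (coord i) ↔ f i = false := Iff.rfl

@[simp] theorem not_adj_leaf_leaf (f g : Fin k → Bool) : ¬(graph k).Adj (leaf f) (leaf g) := id

@[simp] theorem not_adj_root_coord (i : Fin k) : ¬(graph k).Adj root (coord i) := id

@[simp] theorem not_adj_coord_coord (i j : Fin k) : ¬(graph k).Adj (coord i) (coord j) := id

theorem connected (k : ℕ) : (graph k).Connected := by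
  rw [connected_iff_exists_forall_reachable]
  refine ⟨root, fun v => ?_⟩
  rcases v with _ | f | i
  · exact .refl _
  · exact (adj_root_leaf f).reachable
  · exact (adj_root_leaf fun _ => false).reachable.trans (adj_leaf_coord.mpr rfl).reachable

theorem exists_leaf_of_adj {x y : Vertex k} (h : (graph k).Adj x y) :
    (∃ f, x = leaf f) ∨ ∃ f, y = leaf f := by
  rcases x with _ | f | i <;> rcases y with _ | g | j <;> simp_all [graph, BinaryStar.Adj]

theorem exists_leaf_of_mem_edgeSet {e : Sym2 (Vertex k)} (he : e ∈ (graph k).edgeSet) :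
    ∃ f w, (graph k).Adj (leaf f) w ∧ e = s(leaf f, w) := by
  induction e using Sym2.ind with
  | _ x y =>
    rcases exists_leaf_of_adj he with ⟨f, rfl⟩ | ⟨f, rfl⟩
    · exact ⟨f, y, he, rfl⟩
    · exact ⟨f, x, he.symm, Sym2.eq_swap⟩

theorem edgeVertexDist_coord_le_one_iff {f : Fin k → Bool} {w : Vertex k}
    (hw : (graph k).Adj (leaf f) w) (i : Fin k) :
    edgeVertexDist (graph k) s(leaf f, w) (coord i) ≤ 1 ↔ f i = false := by
  rw [edgeVertexDist_mk, min_le_iff, (connected k).dist_le_one_iff,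
    (connected k).dist_le_one_iff]
  rcases w with _ | g | j
  · simp
  · simp at hw
  · by_cases hij : j = i
    · subst hij; simpa using hw
    · simp [hij]

def leaves (k : ℕ) : Finset (Vertex k) :=
  Finset.univ.map ⟨leaf, fun _ _ => leaf.inj⟩

theorem card_leaves : (leaves k).card = 2 ^ k := by
  simp [leaves]

theorem root_not_mem_leaves : root ∉ leaves k := by
  simp [leaves]

theorem adj_root_of_mem_leaves {v : Vertex k} (hv : v ∈ leaves k) : (graph k).Adj root v := by
  obtain ⟨f, -, rfl⟩ := Finset.mem_map.mp hv
  exact adj_root_leaf f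

def coords (k : ℕ) : Finset (Vertex k) :=
  Finset.univ.map ⟨coord, fun _ _ => coord.inj⟩

theorem card_coords : (coords k).card = k := by
  simp [coords]

theorem isEdgeResolvingSet_coords : IsEdgeResolvingSet (graph k) (coords k : Set (Vertex k)) := by
  intro e he e' he' hdist
  replace hdist :
      ∀ i, edgeVertexDist (graph k) e (coord i) = edgeVertexDist (graph k) e' (coord i) :=
    fun i => hdist _ (Finset.mem_map_of_mem _ (Finset.mem_univ i))
  obtain ⟨f, w, hw, rfl⟩ := exists_leaf_of_mem_edgeSet he
  obtain ⟨f', w', hw', rfl⟩ := exists_leaf_of_mem_edgeSet he'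
  obtain rfl : f = f' := funext fun i => by
    have hiff : f i = false ↔ f' i = false := by
      rw [← edgeVertexDist_coord_le_one_iff hw, ← edgeVertexDist_coord_le_one_iff hw', hdist i]
    simpa using hiff
  have hcoord : ∀ i, coord i ∈ s(leaf f, w) ↔ coord i ∈ s(leaf f, w') := fun i => by
    rw [← (connected k).edgeVertexDist_eq_zero_iff, ← (connected k).edgeVertexDist_eq_zero_iff,
      hdist i]
  rcases w with _ | g | j <;> rcases w' with _ | g' | j'
  all_goals simp_all

theorem edgeMetricDim_eq (k : ℕ) : edgeMetricDim (graph k) = k := by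
  refine le_antisymm ?_ ?_
  · simpa only [card_coords] using edgeMetricDim_le (isEdgeResolvingSet_coords (k := k))
  · have hleaves : (leaves k).card ≤ 2 ^ edgeMetricDim (graph k) :=
      card_le_two_pow_edgeMetricDim ⟨_, isEdgeResolvingSet_coords⟩ fun _ => adj_root_of_mem_leaves
    rw [card_leaves] at hleaves
    exact (Nat.pow_le_pow_iff_right Nat.one_lt_two).mp hleaves

end BinaryStar

theorem stmt_6_general (k : ℕ) :
    ∃ (V : Type) (_ : Fintype V) (G : SimpleGraph V),
      G.Connected ∧ edgeMetricDim G = k ∧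
        ∃ (c : V) (L : Finset V), L.card = 2 ^ k ∧ c ∉ L ∧ ∀ v ∈ L, G.Adj c v :=
  ⟨_, inferInstance, BinaryStar.graph k, BinaryStar.connected k, BinaryStar.edgeMetricDim_eq k,
    .root, BinaryStar.leaves k, BinaryStar.card_leaves, BinaryStar.root_not_mem_leaves,
    fun _ => BinaryStar.adj_root_of_mem_leaves⟩

/-- For every `k ≥ 1` there is a connected graph with edge metric dimension
exactly `k` containing the star `K_{1,2^k}` as a subgraph. -/
theorem stmt_6 (k : ℕ) (hk : 1 ≤ k) :
    ∃ (V : Type) (_ : Fintype V) (G : SimpleGraph V),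
      G.Connected ∧ edgeMetricDim G = k ∧
        ∃ (c : V) (L : Finset V), L.card = 2 ^ k ∧ c ∉ L ∧ ∀ v ∈ L, G.Adj c v :=
  stmt_6_general k
end

section
/- For every positive integer k, there exists a connected graph with metric dimension at most 2k that contains K_{n,n} as a subgraph with n = 2^k - 1. -/
open SimpleGraph Finset

/-
Every string other than all-ones has a `0`-digit, so every side vertex has a tag neighbour, and
tags only see their own side. Hence the distance-`1` pattern of a side vertex to the `2k` tags
recovers its side and, digit by digit, its string, while distance `0` singles out the tags
themselves.
-/

lemma IsResolvingSet.metricDim_le {V : Type*} {G : SimpleGraph V} {S : Finset V}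
    (hS : IsResolvingSet G (S : Set V)) : metricDim G ≤ S.card :=
  Nat.sInf_le ⟨S, rfl, hS⟩

lemma isResolvingSet_of_adj {V : Type*} {G : SimpleGraph V} (hG : G.Connected) {S : Set V}
    (hS : ∀ u w, u ∉ S → w ∉ S → (∀ s ∈ S, G.Adj u s ↔ G.Adj w s) → u = w) :
    IsResolvingSet G S := by
  intro u w hdist
  by_cases hu : u ∈ S
  · have : G.dist w u = 0 := by rw [← hdist u hu, dist_self]
    exact (hG.dist_eq_zero_iff.mp this).symm
  by_cases hw : w ∈ S
  · have : G.dist u w = 0 := by rw [hdist w hw, dist_self]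
    exact hG.dist_eq_zero_iff.mp this
  refine hS u w hu hw fun s hs => ?_
  rw [← dist_eq_one_iff_adj, ← dist_eq_one_iff_adj, hdist s hs]

abbrev BinStr (k : ℕ) := {x : Fin k → Bool // x ≠ fun _ => true}

namespace BinStr

variable {k : ℕ}

lemma exists_eq_false (x : BinStr k) : ∃ i, x.1 i = false := by
  by_contra! h
  exact x.2 (funext fun i => by simpa using h i)

def zero (hk : 1 ≤ k) : BinStr k :=
  ⟨fun _ => false, fun h => by simpa using congrFun h ⟨0, hk⟩⟩

end BinStr

/-- The paper's graph: `(b, .inl x)` is the string `x` on side `b` of `K_{2^k,2^k}` minus the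
all-ones vertices, and `(b, .inr i)` is the tag `u_i` (`b = true`) or `r_i` (`b = false`). -/
def taggedBipartite (k : ℕ) : SimpleGraph (Bool × (BinStr k ⊕ Fin k)) where
  Adj
    | (a, .inl _), (b, .inl _) => a ≠ b
    | (a, .inl x), (b, .inr i) => a = b ∧ x.1 i = false
    | (a, .inr i), (b, .inl x) => a = b ∧ x.1 i = false
    | (_, .inr _), (_, .inr _) => False
  symm := ⟨by rintro ⟨a, x | i⟩ ⟨b, y | j⟩ h <;>
    first | exact Ne.symm h | exact ⟨h.1.symm, h.2⟩ | exact h.elim⟩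
  loopless := ⟨by rintro ⟨a, x | i⟩ h <;> simp_all⟩

namespace taggedBipartite

variable {k : ℕ}

@[simp] lemma adj_str_str {a b : Bool} {x y : BinStr k} :
    (taggedBipartite k).Adj (a, .inl x) (b, .inl y) ↔ a ≠ b := Iff.rfl

@[simp] lemma adj_str_tag {a b : Bool} {x : BinStr k} {i : Fin k} :
    (taggedBipartite k).Adj (a, .inl x) (b, .inr i) ↔ a = b ∧ x.1 i = false := Iff.rfl

@[simp] lemma adj_tag_str {a b : Bool} {x : BinStr k} {i : Fin k} :
    (taggedBipartite k).Adj (a, .inr i) (b, .inl x) ↔ a = b ∧ x.1 i = false := Iff.rfl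

lemma connected (hk : 1 ≤ k) : (taggedBipartite k).Connected := by
  let z := BinStr.zero hk
  have reach_zero : ∀ b, (taggedBipartite k).Reachable (b, .inl z) (true, .inl z) := by
    rintro (_ | _)
    · exact Adj.reachable (by simp)
    · rfl
  have reach : ∀ v, (taggedBipartite k).Reachable v (true, .inl z) := by
    rintro ⟨b, x | i⟩
    · exact (show (taggedBipartite k).Adj (b, .inl x) (!b, .inl z) by simp).reachable.trans
        (reach_zero _)
    · exact (show (taggedBipartite k).Adj (b, .inr i) (b, .inl z) by simp [z, BinStr.zero]
        ).reachable.trans (reach_zero _)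
  exact (connected_iff_exists_forall_reachable _).mpr ⟨_, fun v => (reach v).symm⟩

def tags (k : ℕ) : Finset (Bool × (BinStr k ⊕ Fin k)) :=
  univ.map ((Function.Embedding.refl Bool).prodMap Function.Embedding.inr)

lemma card_tags : (tags k).card = 2 * k := by
  simp [tags]

lemma mem_tags {b : Bool} {i : Fin k} : (b, .inr i) ∈ tags k := by
  simp [tags]

lemma exists_eq_str_of_notMem_tags {v : Bool × (BinStr k ⊕ Fin k)} (hv : v ∉ tags k) :
    ∃ b x, v = (b, .inl x) := by
  obtain ⟨b, x | i⟩ := v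
  · exact ⟨b, x, rfl⟩
  · exact absurd mem_tags hv

lemma isResolvingSet_tags (hk : 1 ≤ k) :
    IsResolvingSet (taggedBipartite k) (tags k : Set (Bool × (BinStr k ⊕ Fin k))) := by
  refine isResolvingSet_of_adj (connected hk) fun u w hu hw h => ?_
  obtain ⟨b, x, rfl⟩ := exists_eq_str_of_notMem_tags hu
  obtain ⟨c, y, rfl⟩ := exists_eq_str_of_notMem_tags hw
  obtain ⟨i, hi⟩ := x.exists_eq_false
  obtain rfl : c = b := ((h _ mem_tags).mp ⟨rfl, hi⟩).1
  have hxy : ∀ i, x.1 i = y.1 i := fun i => by simpa using h (c, .inr i) mem_tags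
  rw [Subtype.ext (funext hxy)]

def side (k : ℕ) (b : Bool) : Finset (Bool × (BinStr k ⊕ Fin k)) :=
  univ.map ⟨fun x => (b, .inl x), fun x y h => by simpa using h⟩

lemma card_side (b : Bool) : (side k b).card = 2 ^ k - 1 := by
  simp [side]

lemma disjoint_side {a b : Bool} (hab : a ≠ b) : Disjoint (side k a) (side k b) := by
  simp only [side, Finset.disjoint_left, mem_map, mem_univ, true_and]
  rintro _ ⟨x, rfl⟩ ⟨y, hy⟩
  exact hab (congrArg Prod.fst hy).symm

lemma adj_of_mem_side {a b : Bool} (hab : a ≠ b) {u v : Bool × (BinStr k ⊕ Fin k)}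
    (hu : u ∈ side k a) (hv : v ∈ side k b) : (taggedBipartite k).Adj u v := by
  simp only [side, mem_map, mem_univ, true_and] at hu hv
  obtain ⟨x, rfl⟩ := hu
  obtain ⟨y, rfl⟩ := hv
  exact hab

end taggedBipartite

/-- For every `k ≥ 1` there is a connected graph of metric dimension at most `2k`
containing `K_{n,n}` with `n = 2^k - 1`. -/
theorem stmt_10 (k : ℕ) (hk : 1 ≤ k) :
    ∃ (V : Type) (_ : Fintype V) (G : SimpleGraph V),
      G.Connected ∧ metricDim G ≤ 2 * k ∧
        ∃ A B : Finset V, Disjoint A B ∧ A.card = 2 ^ k - 1 ∧ B.card = 2 ^ k - 1 ∧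
          ∀ a ∈ A, ∀ b ∈ B, G.Adj a b := by
  open taggedBipartite in
  refine ⟨_, inferInstance, taggedBipartite k, connected hk, ?_,
    side k true, side k false, ?_, card_side true, card_side false, ?_⟩
  · exact card_tags (k := k) ▸ (isResolvingSet_tags hk).metricDim_le
  · exact disjoint_side (by decide)
  · exact fun u hu v hv => adj_of_mem_side (by decide) hu hv
end

section
/- A connected graph G of order n and edge metric dimension k has at most 2^{k-1}·n edges. -/
open SimpleGraph Finset

lemma univ_edge_resolving {V : Type*} [Fintype V] (G : SimpleGraph V) (hG : G.Connected) :
    IsEdgeResolvingSet G ((Finset.univ : Finset V) : Set V) := by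
  intro e he f hf h
  induction e using Sym2.ind with
  | _ a b =>
  induction f using Sym2.ind with
  | _ c d =>
  have hab : a ≠ b := (G.mem_edgeSet.mp he).ne
  have key : ∀ x : V, edgeVertexDist G s(c,d) x = 0 → c = x ∨ d = x := by
    intro x hx
    simp only [edgeVertexDist, Sym2.lift_mk, Nat.min_eq_zero_iff] at hx
    rcases hx with hx | hx
    · exact Or.inl (hG.dist_eq_zero_iff.mp hx)
    · exact Or.inr (hG.dist_eq_zero_iff.mp hx)
  have ha := key a (by
    have := h a (by simp)
    simp only [edgeVertexDist, Sym2.lift_mk] at this ⊢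
    simp [← this])
  have hb := key b (by
    have := h b (by simp)
    simp only [edgeVertexDist, Sym2.lift_mk] at this ⊢
    simp [← this])
  rcases ha with ha | ha <;> rcases hb with hb | hb
  · exact absurd (ha ▸ hb) hab
  · rw [← ha, ← hb]
  · rw [← ha, ← hb, Sym2.eq_swap]
  · exact absurd (ha ▸ hb) hab

lemma degree_le {V : Type*} [Fintype V] [DecidableEq V] (G : SimpleGraph V)
    [DecidableRel G.Adj] (hG : G.Connected) (S : Finset V)
    (hS : IsEdgeResolvingSet G (S : Set V)) (v : V) :
    G.degree v ≤ 2 ^ S.card := by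
  classical
  have hinj : Set.InjOn (fun u : V => fun s : S => decide (edgeVertexDist G s(v, u) s = G.dist v s))
      (G.neighborFinset v : Set V) := by
    intro u hu u' hu' huv
    simp only [mem_coe, mem_neighborFinset] at hu hu'
    have he : s(v, u) ∈ G.edgeSet := hu
    have he' : s(v, u') ∈ G.edgeSet := hu'
    have heq : s(v, u) = s(v, u') := by
      apply hS _ he _ he'
      intro s hs
      have hb := congrFun huv ⟨s, hs⟩
      simp only [decide_eq_decide] at hb
      -- each value is dist v s or dist v s - 1
      have hval : ∀ w : V, G.Adj v w →
          edgeVertexDist G s(v, w) s = G.dist v s ∨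
          edgeVertexDist G s(v, w) s = G.dist v s - 1 := by
        intro w hw
        simp only [edgeVertexDist, Sym2.lift_mk]
        rcases le_or_gt (G.dist v s) (G.dist w s) with hle | hlt
        · left; exact min_eq_left hle
        · right
          rw [min_eq_right hlt.le]
          have h1 : G.dist v s ≤ G.dist v w + G.dist w s := hG.dist_triangle
          have h2 : G.dist v w ≤ 1 := dist_le (Walk.cons hw Walk.nil)
          omega
      rcases hval u hu with h1 | h1 <;> rcases hval u' hu' with h2 | h2
      · rw [h1, h2]
      · rw [h1] at hb; rw [h2] at hb ⊢; omega
      · rw [h2] at hb; rw [h1] at hb ⊢; omega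
      · rw [h1, h2]
    rcases Sym2.eq_iff.mp heq with ⟨-, h⟩ | ⟨h1, h2⟩
    · exact h
    · rw [h2, ← h1]
  calc G.degree v = (G.neighborFinset v).card := rfl
    _ ≤ Fintype.card (S → Bool) := by
        apply Finset.card_le_card_of_injOn _ (fun _ _ => Finset.mem_univ _) hinj
    _ = 2 ^ S.card := by simp

/-- A connected graph of order `n` and edge metric dimension `k` has at most
`2^{k-1} n` edges. -/
theorem stmt_14 {V : Type*} [Fintype V] [DecidableEq V] (G : SimpleGraph V)
    [DecidableRel G.Adj] (hG : G.Connected) (k : ℕ) (hk : edgeMetricDim G = k) :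
    G.edgeFinset.card ≤ 2 ^ (k - 1) * Fintype.card V := by
  classical
  have hne : {k | ∃ S : Finset V, S.card = k ∧ IsEdgeResolvingSet G (S : Set V)}.Nonempty :=
    ⟨(Finset.univ : Finset V).card, Finset.univ, rfl, univ_edge_resolving G hG⟩
  have hmem := Nat.sInf_mem hne
  rw [show sInf _ = edgeMetricDim G from rfl, hk] at hmem
  obtain ⟨S, hcard, hS⟩ := hmem
  have hdeg : ∀ v, G.degree v ≤ 2 ^ k := fun v => hcard ▸ degree_le G hG S hS v
  have hsum : 2 * G.edgeFinset.card ≤ 2 ^ k * Fintype.card V := by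
    rw [← sum_degrees_eq_twice_card_edges]
    calc ∑ v, G.degree v ≤ ∑ _v : V, 2 ^ k := Finset.sum_le_sum fun v _ => hdeg v
      _ = 2 ^ k * Fintype.card V := by simp [mul_comm]
  rcases Nat.eq_zero_or_pos k with hk0 | hk1
  · subst hk0
    simp only [pow_zero, one_mul] at hsum ⊢
    omega
  · have : 2 ^ k = 2 * 2 ^ (k - 1) := by
      rw [← pow_succ']
      congr 1
      omega
    rw [this, mul_assoc] at hsum
    omega
end
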